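/- arXiv:2307.14486 — 2 statements merged into one kernel-verified Lean document; each statement's English description precedes it below -/
import Mathlib

section
/- Let d' be a positive integer with d' ≡ 0 (mod 3). The number of integers b₃ with 0 ≤ b₃ < 6d', gcd(b₃, 6d') = 1, and b₃² + 4d' ≡ 1 (mod 12d') equals the number of integers b₄ with 0 ≤ b₄ < 2d' and b₄² ≡ 1 (mod 4d'). -/
/-!
Every `b < 6d'` is uniquely `r + 2d'm` with `r < 2d'` and `m < 3`. If `b² ≡ 1 - 4d' (mod 12d')`
then `r² ≡ 1 (mod 4d')`. Conversely, if `r² - 1 = 4d't` then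
`b² + 4d' - 1 = 4d'(t + 1 + mr + d'm²)`, so the congruence for `b` says exactly
`t + 1 + mr ≡ 0 (mod 3)` (as `3 ∣ d'`); since `r² ≡ 1 (mod 3)`, this linear congruence has exactly
one solution `m < 3`. The condition `gcd(b, 6d') = 1` is automatic, as `1 - 4d'` is a unit
modulo `12d'`.
-/

open Finset

theorem card_filter_range_mul_eq_card_filter_range {n k : ℕ} {P Q : ℕ → Prop}
    [DecidablePred P] [DecidablePred Q]
    (hPQ : ∀ r m, m < k → P (r + n * m) → Q r)
    (hQP : ∀ r < n, Q r → ∃! m, m < k ∧ P (r + n * m)) :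
    ((range (n * k)).filter P).card = ((range n).filter Q).card := by
  have hdecomp : ∀ b < n * k, b % n + n * (b / n) = b ∧ b / n < k := fun b hb =>
    ⟨Nat.mod_add_div b n, Nat.div_lt_of_lt_mul hb⟩
  apply card_nbij (· % n)
  · intro b hb
    simp only [coe_filter, mem_range, Set.mem_ofPred_eq] at hb ⊢
    obtain ⟨hbr, hbk⟩ := hdecomp b hb.1
    exact ⟨Nat.mod_lt _ (Nat.pos_of_ne_zero (by rintro rfl; simp at hb)),
      hPQ _ _ hbk (by rw [hbr]; exact hb.2)⟩
  · intro b₁ hb₁ b₂ hb₂ hmod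
    simp only [coe_filter, mem_range, Set.mem_ofPred_eq] at hb₁ hb₂ hmod
    obtain ⟨hb₁r, hb₁k⟩ := hdecomp b₁ hb₁.1
    obtain ⟨hb₂r, hb₂k⟩ := hdecomp b₂ hb₂.1
    have hn : 0 < n := Nat.pos_of_ne_zero (by rintro rfl; simp at hb₁)
    have hP₁ : P (b₂ % n + n * (b₁ / n)) := by rw [← hmod, hb₁r]; exact hb₁.2
    have hP₂ : P (b₂ % n + n * (b₂ / n)) := by rw [hb₂r]; exact hb₂.2
    obtain ⟨_, -, huniq⟩ := hQP _ (Nat.mod_lt _ hn) (hPQ _ _ hb₂k hP₂)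
    have hq : b₁ / n = b₂ / n := (huniq _ ⟨hb₁k, hP₁⟩).trans (huniq _ ⟨hb₂k, hP₂⟩).symm
    rw [← hb₁r, ← hb₂r, hmod, hq]
  · intro r hr
    simp only [coe_filter, mem_range, Set.mem_ofPred_eq, Set.mem_image] at hr ⊢
    obtain ⟨m, ⟨hmk, hP⟩, -⟩ := hQP r hr.1 hr.2
    refine ⟨r + n * m, ⟨?_, hP⟩, ?_⟩
    · calc r + n * m < n * (m + 1) := by linarith [hr.1]
        _ ≤ n * k := Nat.mul_le_mul_left n hmk
    · rw [Nat.add_mul_mod_self_left, Nat.mod_eq_of_lt hr.1]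

theorem existsUnique_add_mul_eq_zero {K : Type*} [Field K] (a : K) {b : K} (hb : b ≠ 0) :
    ∃! z, a + z * b = 0 :=
  ⟨-a / b, by field_simp; ring, fun z hz => by field_simp; linear_combination hz⟩

theorem ZMod.existsUnique_lt_of_existsUnique {n : ℕ} [NeZero n] {f : ZMod n → Prop}
    (h : ∃! z : ZMod n, f z) : ∃! m : ℕ, m < n ∧ f m := by
  obtain ⟨z, hz, huniq⟩ := h
  refine ⟨z.val, ⟨z.val_lt, by rwa [ZMod.natCast_zmod_val]⟩, ?_⟩
  rintro m ⟨hm, hfm⟩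
  rw [← huniq _ hfm, ZMod.val_natCast, Nat.mod_eq_of_lt hm]

theorem dvd_sq_add_iff {d r t : ℤ} (m : ℤ) (hd : d ≠ 0) (h3 : 3 ∣ d)
    (ht : r ^ 2 - 1 = 4 * d * t) :
    12 * d ∣ (r + 2 * d * m) ^ 2 + 4 * d - 1 ↔ 3 ∣ t + 1 + m * r := by
  rw [show (r + 2 * d * m) ^ 2 + 4 * d - 1 = 4 * d * (t + 1 + m * r + d * m ^ 2) by
      linear_combination ht,
    show 12 * d = 4 * d * 3 by ring, mul_dvd_mul_iff_left (by omega)]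
  exact dvd_add_left (h3.mul_right _)

section

variable {d : ℕ}

theorem sq_natCast_add_two_mul_mul (r m : ℕ) :
    ((r + 2 * d * m : ℕ) : ZMod (4 * d)) ^ 2 = (r : ZMod (4 * d)) ^ 2 := by
  have h0 : ((4 * d : ℕ) : ZMod (4 * d)) = 0 := ZMod.natCast_self _
  push_cast at h0 ⊢
  linear_combination (r * m + d * m ^ 2 : ZMod (4 * d)) * h0

theorem sq_eq_one_of_sq_add_eq_one {b : ℕ} (h : (b : ZMod (12 * d)) ^ 2 + 4 * d = 1) :
    (b : ZMod (4 * d)) ^ 2 = 1 := by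
  have h0 : ((4 * d : ℕ) : ZMod (4 * d)) = 0 := ZMod.natCast_self _
  have h' := congrArg (ZMod.castHom (show 4 * d ∣ 12 * d from ⟨3, by ring⟩) (ZMod (4 * d))) h
  simp only [map_add, map_pow, map_mul, map_natCast, map_one, map_ofNat] at h'
  push_cast at h0
  rwa [h0, add_zero] at h'

theorem coprime_of_sq_add_eq_one (h3 : 3 ∣ d) {b : ℕ}
    (h : (b : ZMod (12 * d)) ^ 2 + 4 * d = 1) : b.Coprime (6 * d) := by
  have hunit : IsUnit (b : ZMod (12 * d)) := by
    obtain ⟨e, rfl⟩ := h3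
    have h0 : ((12 * (3 * e) : ℕ) : ZMod (12 * (3 * e))) = 0 := ZMod.natCast_self _
    push_cast at h0 h ⊢
    -- `(1 - 4d)(1 + 4d) = 1 - 16d²` and `12d ∣ 16d²` because `3 ∣ d`
    refine IsUnit.of_mul_eq_one (b * (1 + 4 * (3 * e))) ?_
    linear_combination (1 + 4 * (3 * e : ZMod (12 * (3 * e)))) * h - 4 * e * h0
  exact ((ZMod.isUnit_iff_coprime b _).mp hunit).coprime_dvd_right ⟨2, by ring⟩

theorem existsUnique_lt_three_sq_add_eq_one (h3 : 3 ∣ d) (hd : 0 < d) {r : ℕ}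
    (hr : (r : ZMod (4 * d)) ^ 2 = 1) :
    ∃! m, m < 3 ∧ ((r + 2 * d * m : ℕ) : ZMod (12 * d)) ^ 2 + 4 * d = 1 := by
  obtain ⟨t, ht⟩ : (4 * d : ℤ) ∣ (r : ℤ) ^ 2 - 1 := by
    rw [← Nat.cast_ofNat, ← Nat.cast_mul, ← ZMod.intCast_zmod_eq_zero_iff_dvd]
    push_cast
    exact sub_eq_zero.mpr hr
  have h3z : (3 : ℤ) ∣ d := by exact_mod_cast h3
  have hd3 : (d : ZMod 3) = 0 := by exact_mod_cast (ZMod.natCast_eq_zero_iff d 3).mpr h3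
  have hr3 : (r : ZMod 3) ≠ 0 := by
    intro hr0
    have := congrArg (fun x : ℤ => (x : ZMod 3)) ht
    push_cast at this
    rw [hr0, hd3] at this
    simp at this
  have hiff : ∀ m : ℕ, ((r + 2 * d * m : ℕ) : ZMod (12 * d)) ^ 2 + 4 * d = 1 ↔
      ((t : ZMod 3) + 1) + (m : ZMod 3) * r = 0 := by
    intro m
    have key : ((12 * d : ℕ) : ℤ) ∣ ((r : ℤ) + 2 * d * m) ^ 2 + 4 * d - 1 ↔
        ((3 : ℕ) : ℤ) ∣ t + 1 + m * r := by
      push_cast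
      exact dvd_sq_add_iff _ (by omega) h3z ht
    rw [← ZMod.intCast_zmod_eq_zero_iff_dvd, ← ZMod.intCast_zmod_eq_zero_iff_dvd] at key
    push_cast at key
    rw [← key]
    push_cast
    exact sub_eq_zero.symm
  simp_rw [hiff]
  exact ZMod.existsUnique_lt_of_existsUnique (existsUnique_add_mul_eq_zero _ hr3)

end

theorem stmt_9_general (d' : ℕ) (h3 : 3 ∣ d') :
    ((Finset.range (6 * d')).filter
        (fun b : ℕ => Nat.gcd b (6 * d') = 1 ∧
          (b : ZMod (12 * d')) ^ 2 + 4 * d' = 1)).card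
      = ((Finset.range (2 * d')).filter
        (fun b : ℕ => ((b : ℕ) : ZMod (4 * d')) ^ 2 = 1)).card := by
  rw [show range (6 * d') = range (2 * d' * 3) by congr 1; ring]
  refine card_filter_range_mul_eq_card_filter_range
    (fun r m _ hP => ?_) (fun r hr hQ => ?_)
  · rw [← sq_natCast_add_two_mul_mul (d := d') r m]
    exact sq_eq_one_of_sq_add_eq_one hP.2
  · obtain ⟨m, ⟨hm, hP⟩, huniq⟩ := existsUnique_lt_three_sq_add_eq_one h3 (by omega) hQ
    exact ⟨m, ⟨hm, coprime_of_sq_add_eq_one h3 hP, hP⟩, fun m' hm' => huniq m' ⟨hm'.1, hm'.2.2⟩⟩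

/-- For `3 ∣ d'`, the number of `b₃ ∈ [0, 6d')` with `gcd(b₃, 6d') = 1` and
`b₃² + 4d' ≡ 1 (mod 12d')` equals the number of `b₄ ∈ [0, 2d')` with
`b₄² ≡ 1 (mod 4d')`. -/
theorem stmt_9 (d' : ℕ) (hd' : 0 < d') (h3 : 3 ∣ d') :
    ((Finset.range (6 * d')).filter
        (fun b : ℕ => Nat.gcd b (6 * d') = 1 ∧
          (b : ZMod (12 * d')) ^ 2 + 4 * d' = 1)).card
      = ((Finset.range (2 * d')).filter
        (fun b : ℕ => ((b : ℕ) : ZMod (4 * d')) ^ 2 = 1)).card :=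
  stmt_9_general d' h3
end

section
/- Let d' ≥ 1. The number of integers b₃ with 0 ≤ b₃ < 6d', gcd(b₃, 6d') = 1, and b₃² ≡ 1 (mod 12d') equals half the number of units x ∈ (ℤ/12d')^× with x² = 1. -/
/-!
Since `(b + 2n)² = b² + 4n(b + n)`, the condition `b² ≡ 1 (mod 4n)` is `2n`-periodic in `b`,
so its solutions in `[0, 4n)` are two copies of those in `[0, 2n)`. Such `b` are automatically
coprime to `4n`, and the solutions in `[0, 4n)` are exactly the values of the units `x` of
`ℤ/4n` with `x² = 1`.
-/

open Function

theorem Nat.count_mul_of_periodic {p : ℕ → Prop} [DecidablePred p] {a : ℕ}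
    (hp : Periodic p a) (k : ℕ) : Nat.count p (k * a) = k * Nat.count p a := by
  induction k with
  | zero => simp
  | succ k ih =>
    rw [add_mul, one_mul, Nat.count_add, ih, add_mul, one_mul]
    simp only [add_comm (k * a), show ∀ j, p (j + k * a) = p j from hp.nat_mul k]

theorem Units.card_pow_eq_one {M : Type*} [Monoid M] {n : ℕ} (hn : n ≠ 0) :
    Nat.card {u : Mˣ // u ^ n = 1} = Nat.card {x : M // x ^ n = 1} :=
  Nat.card_congr
    { toFun u := ⟨u.1, by rw [← Units.val_pow_eq_pow_val, u.2, Units.val_one]⟩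
      invFun x := ⟨Units.ofPowEqOne x n x.2 hn, Units.pow_ofPowEqOne x.2 hn⟩
      left_inv _ := Subtype.ext (Units.ext rfl)
      right_inv _ := rfl }

theorem ZMod.card_subtype_eq_count {m : ℕ} [NeZero m] (P : ZMod m → Prop) [DecidablePred P] :
    Nat.card {x : ZMod m // P x} = Nat.count (fun k : ℕ => P k) m := by
  rw [Nat.count_eq_card_filter_range, Nat.card_eq_fintype_card, Fintype.card_subtype]
  refine Finset.card_nbij' ZMod.val (fun k => (k : ZMod m)) ?_ ?_ ?_ ?_ <;>
    simp +contextual [Set.MapsTo, Set.LeftInvOn, Set.RightInvOn, ZMod.val_lt, Nat.mod_eq_of_lt]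

theorem ZMod.periodic_natCast_sq_four_mul (n : ℕ) :
    Periodic (fun b : ℕ => (b : ZMod (4 * n)) ^ 2) (2 * n) := fun b => by
  have h : ((4 * n : ℕ) : ZMod (4 * n)) = 0 := ZMod.natCast_self _
  push_cast at h ⊢
  linear_combination (b + n : ZMod (4 * n)) * h

theorem Nat.coprime_of_natCast_pow_eq_one {m b k : ℕ} (h : (b : ZMod m) ^ k = 1) (hk : k ≠ 0) :
    Nat.Coprime b m :=
  (ZMod.isUnit_iff_coprime b m).mp (IsUnit.of_pow_eq_one h hk)

theorem ZMod.two_mul_card_filter_range_eq_card_units_sq_eq_one (n : ℕ) [NeZero n] :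
    2 * ((Finset.range (2 * n)).filter
        (fun b : ℕ => Nat.gcd b (2 * n) = 1 ∧ (b : ZMod (4 * n)) ^ 2 = 1)).card
      = Nat.card {x : (ZMod (4 * n))ˣ // x ^ 2 = 1} := by
  have hperiodic : Periodic (fun b : ℕ => (b : ZMod (4 * n)) ^ 2 = 1) (2 * n) := fun b => by
    simp only [ZMod.periodic_natCast_sq_four_mul n b]
  have hcount := Nat.count_mul_of_periodic hperiodic 2
  rw [show 2 * (2 * n) = 4 * n by ring] at hcount
  rw [Units.card_pow_eq_one two_ne_zero, ZMod.card_subtype_eq_count, hcount,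
    Nat.count_eq_card_filter_range]
  congr 2
  refine Finset.filter_congr fun b _ => and_iff_right_of_imp fun hb => ?_
  exact (Nat.coprime_of_natCast_pow_eq_one hb two_ne_zero).coprime_dvd_right ⟨2, by ring⟩

/-- The number of `b₃ ∈ [0, 6d')` with `gcd(b₃, 6d') = 1` and
`b₃² ≡ 1 (mod 12d')` equals half the number of square roots of unity in
`(ℤ/12d')ˣ`. -/
theorem stmt_10 (d' : ℕ) (hd' : 1 ≤ d') :
    2 * ((Finset.range (6 * d')).filter
        (fun b : ℕ => Nat.gcd b (6 * d') = 1 ∧ (b : ZMod (12 * d')) ^ 2 = 1)).card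
      = Nat.card {x : (ZMod (12 * d'))ˣ // x ^ 2 = 1} := by
  have : NeZero (3 * d') := ⟨by omega⟩
  have h := ZMod.two_mul_card_filter_range_eq_card_units_sq_eq_one (3 * d')
  rwa [show 2 * (3 * d') = 6 * d' by ring, show 4 * (3 * d') = 12 * d' by ring] at h
end
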